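/- Given a maximum independent set M of G_P, let F_M be the associated partial order on {1,…,n}. Then for every j ∈ {1,…,n}, the principal order ideal Λ_j^{F_M} = {i : i ≤_{F_M} j} equals J, where J is the unique element of M satisfying J \ μ(M,J) = {j}. -/

import Mathlib

attribute [local instance] Classical.propDecidable

noncomputable section

open Finset

variable {n : ℕ}

/-- The comparability graph of the poset structure `P` on `Fin n`; for an order
ideal of `P`, connectivity of its induced subgraph in this graph agrees with
connectivity of the Hasse diagram. -/
def compGraph (P : PartialOrder (Fin n)) : SimpleGraph (Fin n) where
  Adj i j := i ≠ j ∧ (P.le i j ∨ P.le j i)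
  symm := by
    constructor
    intro i j h
    exact ⟨h.1.symm, h.2.symm⟩
  loopless := by
    constructor
    intro i h
    exact h.1 rfl

/-- `J` is an order ideal of the poset `P`. -/
def IsIdeal (P : PartialOrder (Fin n)) (J : Finset (Fin n)) : Prop :=
  ∀ i ∈ J, ∀ j : Fin n, P.le j i → j ∈ J

/-- The Hasse diagram of `J` as a subposet of `P` is a connected graph. -/
def JConn (P : PartialOrder (Fin n)) (J : Finset (Fin n)) : Prop :=
  ((compGraph P).induce (↑J : Set (Fin n))).Connected

/-- `J` is a connected order ideal of `P`. -/
def IsConnIdeal (P : PartialOrder (Fin n)) (J : Finset (Fin n)) : Prop :=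
  IsIdeal P J ∧ JConn P J

/-- The type of connected order ideals of `P` (the vertices of `G_P`). -/
abbrev ConnIdeal (P : PartialOrder (Fin n)) : Type :=
  {J : Finset (Fin n) // IsConnIdeal P J}

instance (P : PartialOrder (Fin n)) : Fintype (ConnIdeal P) := Fintype.ofFinite _

/-- `A` and `B` intersect nontrivially. -/
def Nontriv (A B : Finset (Fin n)) : Prop :=
  (A ∩ B).Nonempty ∧ ¬ A ⊆ B ∧ ¬ B ⊆ A

/-- The graph `G_P` on the connected order ideals of `P`, with two ideals
adjacent iff they intersect nontrivially. -/
def GP (P : PartialOrder (Fin n)) : SimpleGraph (ConnIdeal P) where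
  Adj A B := Nontriv A.1 B.1
  symm := by
    constructor
    intro A B h
    exact ⟨by rw [Finset.inter_comm]; exact h.1, h.2.2, h.2.1⟩
  loopless := by
    constructor
    intro A h
    exact h.2.1 (Finset.Subset.refl _)

instance (P : PartialOrder (Fin n)) : Fintype ((GP P).ConnectedComponent) :=
  Fintype.ofFinite _

instance (P : PartialOrder (Fin n)) : Fintype ((GP P).edgeSet) :=
  Fintype.ofFinite _

/-- `s` is an independent set of the graph `G`. -/
def IsIndep {V : Type*} (G : SimpleGraph V) (s : Finset V) : Prop :=
  ∀ a ∈ s, ∀ b ∈ s, ¬ G.Adj a b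

/-- `s` is a maximum independent set of the graph `G`. -/
def IsMaxIndep {V : Type*} (G : SimpleGraph V) (s : Finset V) : Prop :=
  IsIndep G s ∧ ∀ t : Finset V, IsIndep G t → t.card ≤ s.card

/-- `s` is a maximum independent set of the subgraph of `G` induced on the
vertex set `S` (e.g. on a connected component of `G`). -/
def IsMaxIndepOn {V : Type*} (G : SimpleGraph V) (S : Set V) (s : Finset V) : Prop :=
  ↑s ⊆ S ∧ IsIndep G s ∧ ∀ t : Finset V, ↑t ⊆ S → IsIndep G t → t.card ≤ s.card

/-- `μ(M, J) = ⋃_{J' ∈ M, J' ⊊ J} J'`. -/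
def mu (P : PartialOrder (Fin n)) (M : Finset (ConnIdeal P)) (J : Finset (Fin n)) :
    Finset (Fin n) :=
  (M.filter (fun J' => J'.1 ⊂ J)).biUnion (fun J' => J'.1)

/-- The strict order relation of the poset `F_M` associated with a maximum
independent set `M` of `G_P`: `i <_{F_M} j` iff `J_a ⊊ J_b` where `J_a, J_b ∈ M`
satisfy `J_a \ μ(M,J_a) = {i}` and `J_b \ μ(M,J_b) = {j}`. -/
def FMlt (P : PartialOrder (Fin n)) (M : Finset (ConnIdeal P)) (i j : Fin n) : Prop :=
  ∃ Ja ∈ M, ∃ Jb ∈ M,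
    Ja.1 \ mu P M Ja.1 = {i} ∧ Jb.1 \ mu P M Jb.1 = {j} ∧ Ja.1 ⊂ Jb.1

/-- The order relation of the poset `F_M`. -/
def FMle (P : PartialOrder (Fin n)) (M : Finset (ConnIdeal P)) (i j : Fin n) : Prop :=
  i = j ∨ FMlt P M i j

/-- Strict relation associated with the relation `le`. -/
def ltRel (le : Fin n → Fin n → Prop) (i j : Fin n) : Prop := le i j ∧ i ≠ j

/-- `j` covers `i` in the order given by the relation `le`. -/
def CovRel (le : Fin n → Fin n → Prop) (i j : Fin n) : Prop :=
  ltRel le i j ∧ ∀ k : Fin n, ltRel le i k → ¬ ltRel le k j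

/-- The principal order ideal `Λ_i = {j : j ≤ i}` of the order given by `le`. -/
def LamRel (le : Fin n → Fin n → Prop) (i : Fin n) : Finset (Fin n) :=
  Finset.univ.filter (fun j => le j i)

/-- The descent set of a forest order given by the relation `le`:
elements `i` whose parent (the element covering `i`) is smaller than `i`. -/
def DesRel (le : Fin n → Fin n → Prop) : Finset (Fin n) :=
  Finset.univ.filter (fun i => ∃ j : Fin n, CovRel le i j ∧ j < i)

/-- `Des(M) = Des(F_M)`. -/
def DesM (P : PartialOrder (Fin n)) (M : Finset (ConnIdeal P)) : Finset (Fin n) :=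
  DesRel (FMle P M)

/-- `Des(M_r, M)`. -/
def DesMr (P : PartialOrder (Fin n)) (Mr M : Finset (ConnIdeal P)) : Finset (Fin n) :=
  (DesM P M).filter (fun i => ∃ J ∈ Mr, J.1 \ mu P M J.1 = {i})

/-- `Des̄(M_r, M)`. -/
def DesBarMr (P : PartialOrder (Fin n)) (Mr M : Finset (ConnIdeal P)) :
    Finset (ConnIdeal P) :=
  Mr.filter (fun J => ∃ i ∈ DesMr P Mr M, J.1 \ mu P M J.1 = {i})

/-- The relation `le` is (the order relation of) a `P`-forest: a partial order
whose Hasse diagram is a forest, all of whose principal order ideals are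
connected order ideals of `P`, and such that for incomparable `i, j` the union
`Λ_i ∪ Λ_j` is a disconnected order ideal of `P`. -/
structure IsPForestRel (P : PartialOrder (Fin n)) (le : Fin n → Fin n → Prop) : Prop where
  refl : ∀ i, le i i
  trans : ∀ i j k, le i j → le j k → le i k
  antisymm : ∀ i j, le i j → le j i → i = j
  forest : ∀ i j k, CovRel le i j → CovRel le i k → j = k
  connIdeal : ∀ i, IsConnIdeal P (LamRel le i)
  disc : ∀ i j : Fin n, ¬ le i j → ¬ le j i →
    IsIdeal P (LamRel le i ∪ LamRel le j) ∧ ¬ JConn P (LamRel le i ∪ LamRel le j)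

/-- The principal order ideal `Λ_i^P` of `P`. -/
def PIdeal (P : PartialOrder (Fin n)) (i : Fin n) : Finset (Fin n) :=
  Finset.univ.filter (fun k => P.le k i)

/-- The generating set `gs(J)`: the maximal elements of `J` with respect to `P`. -/
def gsJ (P : PartialOrder (Fin n)) (J : Finset (Fin n)) : Finset (Fin n) :=
  J.filter (fun i => ∀ j ∈ J, ¬ P.lt i j)

/-- `P` is naturally labeled. -/
def NatLabeled (P : PartialOrder (Fin n)) : Prop :=
  ∀ i j : Fin n, P.lt i j → i < j

/-- `U_max(M, J)`: the maximal members of `U(M,J) = {J' ∈ M : J' ⊊ J}`. -/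
def Umax (P : PartialOrder (Fin n)) (M : Finset (ConnIdeal P)) (J : Finset (Fin n)) :
    Finset (ConnIdeal P) :=
  (M.filter (fun Ja => Ja.1 ⊂ J)).filter
    (fun Ja => ∀ Jb ∈ M, Jb.1 ⊂ J → Jb ≠ Ja → ¬ Ja.1 ⊂ Jb.1)

/-- The set of vertices of `G_P` which are principal order ideals of `P`. -/
def PIdealSet (P : PartialOrder (Fin n)) : Set (ConnIdeal P) :=
  {A : ConnIdeal P | ∃ i : Fin n, A.1 = PIdeal P i}

/-- The graph `H_P`: the subgraph of `G_P` induced by the principal order ideals. -/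
def HP (P : PartialOrder (Fin n)) : SimpleGraph (PIdealSet P) :=
  (GP P).induce (PIdealSet P)

/-- `f` is a `P`-partition. -/
def IsPPartition (P : PartialOrder (Fin n)) (f : Fin n → ℕ) : Prop :=
  (∀ i j : Fin n, P.lt i j → f j ≤ f i) ∧
  (∀ i j : Fin n, P.lt i j → j < i → f j < f i)

/-- The monomial `∏_{k ∈ J} x_k`. -/
def xJ (J : Finset (Fin n)) : MvPowerSeries (Fin n) ℚ :=
  ∏ k ∈ J, MvPowerSeries.X k

/-- The set of linear extensions of `P`, viewed as permutations `w` of `Fin n`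
(in positions `0, …, n-1`) such that `i < j` whenever `w i <_P w j`. -/
def LinExts (P : PartialOrder (Fin n)) : Finset (Equiv.Perm (Fin n)) :=
  Finset.univ.filter (fun w => ∀ i j : Fin n, P.lt (w i) (w j) → i < j)

/-- The major index of a permutation (with 1-indexed positions). -/
def maj (w : Equiv.Perm (Fin n)) : ℕ :=
  ∑ i ∈ Finset.univ.filter
      (fun i : Fin n => ∃ h : (i : ℕ) + 1 < n, w ⟨(i : ℕ) + 1, h⟩ < w i),
    ((i : ℕ) + 1)

/-- The finset of maximum independent sets of the connected component `c` of `G_P`. -/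
def MaxIndepsOn (P : PartialOrder (Fin n)) (c : (GP P).ConnectedComponent) :
    Finset (Finset (ConnIdeal P)) :=
  Finset.univ.filter (fun Mr : Finset (ConnIdeal P) => IsMaxIndepOn (GP P) c.supp Mr)

/-!
Members of an independent set of `G_P` that meet are nested, so the new parts `J \ μ(M,J)`
of the members of `M` are pairwise disjoint. They are also nonempty: if the members of `M`
strictly inside a connected ideal `J` covered it, a largest one would contain every element of
`J` comparable to one of its own elements, contradicting connectedness. The connected components
of the initial segments of a linear extension of `P` form an independent set with `n` members,
so a maximum `M` has at least `n` members; hence every new part is a singleton and each element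
is the new element of exactly one member. Laminarity then shows that `i ∈ J` exactly when the
member with new element `i` lies inside `J`.
-/

section

variable {ι α : Type*} [Fintype α]

theorem Finset.exists_eq_singleton_of_pairwiseDisjoint {s : Finset ι} {f : ι → Finset α}
    (hdisj : (s : Set ι).PairwiseDisjoint f) (hne : ∀ i ∈ s, (f i).Nonempty)
    (hcard : Fintype.card α ≤ s.card) (a : α) : ∃ i ∈ s, f i = {a} := by
  have hone : ∀ i ∈ s, 1 ≤ (f i).card := fun i hi => card_pos.2 (hne i hi)
  have hsum : ∑ i ∈ s, (f i).card = (s.biUnion f).card := (card_biUnion hdisj).symm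
  have hbound : (s.biUnion f).card ≤ s.card := (card_le_univ _).trans hcard
  have hsum_le : ∑ i ∈ s, (f i).card ≤ ∑ _i ∈ s, 1 := by
    rw [sum_const, smul_eq_mul, mul_one, hsum]
    exact hbound
  have hsingle : ∀ i ∈ s, (f i).card = 1 := fun i hi =>
    (((sum_eq_sum_iff_of_le hone).1 (le_antisymm (sum_le_sum hone) hsum_le)) i hi).symm
  have hcover : s.biUnion f = univ := by
    refine eq_univ_of_card _ (le_antisymm (card_le_univ _) (hcard.trans ?_))
    rw [← hsum, sum_congr rfl hsingle, sum_const, smul_eq_mul, mul_one]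
  obtain ⟨i, hi, hai⟩ := mem_biUnion.1 (hcover ▸ mem_univ a)
  obtain ⟨b, hb⟩ := card_eq_one.1 (hsingle i hi)
  rw [hb, mem_singleton] at hai
  exact ⟨i, hi, hai ▸ hb⟩

end

namespace SimpleGraph

variable {V : Type*} (G : SimpleGraph V) (s : V → V → Prop)

def belowGraph (i : V) : SimpleGraph V where
  Adj a b := G.Adj a b ∧ s a i ∧ s b i
  symm := ⟨fun _ _ h => ⟨h.1.symm, h.2.2, h.2.1⟩⟩
  loopless := ⟨fun _ h => G.loopless.irrefl _ h.1⟩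

def belowComponent (i : V) : Set V := ((G.belowGraph s i).connectedComponentMk i).supp

variable {G s}

theorem belowGraph_le (i : V) : G.belowGraph s i ≤ G := fun _ _ h => h.1

theorem mem_belowComponent_self (i : V) : i ∈ G.belowComponent s i := rfl

theorem mem_belowComponent_iff {i k : V} :
    k ∈ G.belowComponent s i ↔ (G.belowGraph s i).Reachable k i :=
  ConnectedComponent.eq

theorem rel_of_mem_belowComponent [Std.Refl s] {i k : V} (hk : k ∈ G.belowComponent s i) :
    s k i := by
  obtain ⟨p⟩ := mem_belowComponent_iff.1 hk
  cases p with
  | nil => exact refl_of s i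
  | cons h _ => exact h.2.1

theorem connected_induce_belowComponent (i : V) :
    (G.induce (G.belowComponent s i)).Connected :=
  (ConnectedComponent.connected_toSimpleGraph _).mono
    (comap_monotone _ (belowGraph_le i))

theorem belowComponent_subset_of_rel [IsTrans V s] {i k : V} (hik : s i k)
    (h : (G.belowComponent s i ∩ G.belowComponent s k).Nonempty) :
    G.belowComponent s i ⊆ G.belowComponent s k := by
  obtain ⟨x, hxi, hxk⟩ := h
  have hle : G.belowGraph s i ≤ G.belowGraph s k := fun _ _ h =>
    ⟨h.1, _root_.trans_of s h.2.1 hik, _root_.trans_of s h.2.2 hik⟩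
  intro y hy
  exact mem_belowComponent_iff.2 <|
    ((mem_belowComponent_iff.1 hy).mono hle).trans
      (((mem_belowComponent_iff.1 hxi).mono hle).symm.trans (mem_belowComponent_iff.1 hxk))

end SimpleGraph

section LinearExtension

variable (P : PartialOrder (Fin n)) (s : Fin n → Fin n → Prop)

theorem isIdeal_belowComponent [IsPreorder (Fin n) s] (hPs : ∀ a b, P.le a b → s a b)
    (i : Fin n) : IsIdeal P ((compGraph P).belowComponent s i).toFinset := by
  intro k hk m hmk
  rw [Set.mem_toFinset] at hk ⊢
  rcases eq_or_ne m k with rfl | hne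
  · exact hk
  · have hki := SimpleGraph.rel_of_mem_belowComponent hk
    have hadj : ((compGraph P).belowGraph s i).Adj k m :=
      ⟨⟨hne.symm, Or.inr hmk⟩, hki, _root_.trans_of s (hPs m k hmk) hki⟩
    exact SimpleGraph.ConnectedComponent.mem_supp_of_adj_mem_supp _ hk hadj

theorem jConn_belowComponent (i : Fin n) :
    JConn P ((compGraph P).belowComponent s i).toFinset := by
  rw [JConn, Set.coe_toFinset]
  exact SimpleGraph.connected_induce_belowComponent i

end LinearExtension

theorem exists_isIndep_card_eq (P : PartialOrder (Fin n)) :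
    ∃ T : Finset (ConnIdeal P), IsIndep (GP P) T ∧ T.card = n := by
  have : IsPartialOrder (Fin n) P.le :=
    { refl := P.le_refl, trans := P.le_trans, antisymm := P.le_antisymm }
  obtain ⟨s, hs, hPs⟩ := extend_partialOrder P.le
  let C : Fin n → ConnIdeal P := fun i =>
    ⟨((compGraph P).belowComponent s i).toFinset,
      isIdeal_belowComponent P s hPs i, jConn_belowComponent P s i⟩
  have hC : Function.Injective C := fun i k h => by
    have hi : i ∈ (C k).1 := h ▸ Set.mem_toFinset.2 (SimpleGraph.mem_belowComponent_self i)
    have hk : k ∈ (C i).1 := h ▸ Set.mem_toFinset.2 (SimpleGraph.mem_belowComponent_self k)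
    rw [Set.mem_toFinset] at hi hk
    exact antisymm_of s (SimpleGraph.rel_of_mem_belowComponent hi)
      (SimpleGraph.rel_of_mem_belowComponent hk)
  refine ⟨univ.image C, ?_, by rw [card_image_of_injective _ hC, card_univ, Fintype.card_fin]⟩
  rintro _ hA _ hB ⟨hmeet, hAB, hBA⟩
  obtain ⟨i, -, rfl⟩ := mem_image.1 hA
  obtain ⟨k, -, rfl⟩ := mem_image.1 hB
  simp only [C, Set.toFinset_nonempty, ← Set.toFinset_inter, Set.toFinset_subset_toFinset]
    at hmeet hAB hBA
  rcases total_of s i k with hik | hki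
  · exact hAB (SimpleGraph.belowComponent_subset_of_rel hik hmeet)
  · exact hBA (SimpleGraph.belowComponent_subset_of_rel hki (Set.inter_comm _ _ ▸ hmeet))

section IndependentSet

variable {P : PartialOrder (Fin n)} {M : Finset (ConnIdeal P)} {A B : ConnIdeal P}

theorem IsIndep.subset_or_subset (hM : IsIndep (GP P) M) (hA : A ∈ M) (hB : B ∈ M)
    (hAB : (A.1 ∩ B.1).Nonempty) : A.1 ⊆ B.1 ∨ B.1 ⊆ A.1 :=
  or_iff_not_imp_left.2 fun h => by_contra fun h' => hM A hA B hB ⟨hAB, h, h'⟩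

theorem mem_mu_iff {J : Finset (Fin n)} {i : Fin n} :
    i ∈ mu P M J ↔ ∃ B ∈ M, B.1 ⊂ J ∧ i ∈ B.1 := by
  simp only [mu, mem_biUnion, mem_filter, and_assoc]

theorem IsIndep.subset_of_mem_sdiff_mu (hM : IsIndep (GP P) M) (hA : A ∈ M) (hB : B ∈ M)
    {x : Fin n} (hxA : x ∈ A.1 \ mu P M A.1) (hxB : x ∈ B.1) : A.1 ⊆ B.1 := by
  rw [mem_sdiff, mem_mu_iff] at hxA
  rcases hM.subset_or_subset hA hB ⟨x, mem_inter.2 ⟨hxA.1, hxB⟩⟩ with hAB | hBA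
  · exact hAB
  · by_contra hAB
    exact hxA.2 ⟨B, hB, ⟨hBA, hAB⟩, hxB⟩

theorem IsIndep.pairwiseDisjoint_sdiff_mu (hM : IsIndep (GP P) M) :
    (M : Set (ConnIdeal P)).PairwiseDisjoint (fun A => A.1 \ mu P M A.1) := by
  intro A hA B hB hne
  refine disjoint_left.2 fun x hxA hxB => hne (Subtype.ext (subset_antisymm ?_ ?_))
  · exact hM.subset_of_mem_sdiff_mu hA hB hxA (mem_sdiff.1 hxB).1
  · exact hM.subset_of_mem_sdiff_mu hB hA hxB (mem_sdiff.1 hxA).1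

theorem IsIndep.mem_of_adj_of_maximal (hM : IsIndep (GP P) M) (hcover : A.1 ⊆ mu P M A.1)
    (hB : B ∈ M) (hmax : ∀ B' ∈ M, B'.1 ⊂ A.1 → ¬ B.1 ⊂ B'.1) {a b : Fin n}
    (ha : a ∈ B.1) (hb : b ∈ A.1) (hab : (compGraph P).Adj a b) : b ∈ B.1 := by
  rcases hab.2 with hle | hle
  · obtain ⟨B', hB', hB'A, hbB'⟩ := mem_mu_iff.1 (hcover hb)
    rcases hM.subset_or_subset hB hB' ⟨a, mem_inter.2 ⟨ha, B'.2.1 b hbB' a hle⟩⟩ with h | h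
    · by_contra hbB
      exact hmax B' hB' hB'A ⟨h, fun h' => hbB (h' hbB')⟩
    · exact h hbB'
  · exact B.2.1 a ha b hle

theorem IsIndep.sdiff_mu_nonempty (hM : IsIndep (GP P) M) (A : ConnIdeal P) :
    (A.1 \ mu P M A.1).Nonempty := by
  rw [nonempty_iff_ne_empty, Ne, sdiff_eq_empty_iff_subset]
  intro hcover
  have hsub : (M.filter (·.1 ⊂ A.1)).Nonempty := by
    obtain ⟨⟨v, hv⟩⟩ := A.2.2.nonempty
    obtain ⟨B, hB, hBA, -⟩ := mem_mu_iff.1 (hcover hv)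
    exact ⟨B, mem_filter.2 ⟨hB, hBA⟩⟩
  obtain ⟨B, hB, hBmax⟩ := exists_max_image _ (·.1.card) hsub
  rw [mem_filter] at hB
  have hmax : ∀ B' ∈ M, B'.1 ⊂ A.1 → ¬ B.1 ⊂ B'.1 := fun B' hB' hB'A hlt =>
    (card_lt_card hlt).not_ge (hBmax B' (mem_filter.2 ⟨hB', hB'A⟩))
  obtain ⟨⟨a, ha⟩⟩ := B.2.2.nonempty
  obtain ⟨b, hbA, hbB⟩ := exists_of_ssubset hB.2
  obtain ⟨p⟩ := A.2.2.preconnected ⟨a, hB.2.1 ha⟩ ⟨b, hbA⟩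
  obtain ⟨d, -, hd, hd'⟩ := p.exists_boundary_dart {v | v.1 ∈ B.1} ha hbB
  exact hd' (hM.mem_of_adj_of_maximal hcover hB.1 hmax hd d.snd.2 d.adj)

theorem IsMaxIndep.exists_sdiff_mu_eq_singleton (hM : IsMaxIndep (GP P) M) (i : Fin n) :
    ∃ A ∈ M, A.1 \ mu P M A.1 = {i} := by
  obtain ⟨T, hT, hTcard⟩ := exists_isIndep_card_eq P
  refine exists_eq_singleton_of_pairwiseDisjoint hM.1.pairwiseDisjoint_sdiff_mu
    (fun A _ => hM.1.sdiff_mu_nonempty A) ?_ i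
  exact (Fintype.card_fin n).trans_le (hTcard.symm.trans_le (hM.2 T hT))

end IndependentSet

/-- Lemma 2.4: for a maximum independent set `M` of `G_P` and
the associated order `F_M`, for every `j` the principal order ideal
`Λ_j^{F_M} = {i : i ≤_{F_M} j}` equals the unique `J ∈ M` with `J \ μ(M,J) = {j}`. -/
theorem statement_7 (n : ℕ) (P : PartialOrder (Fin n))
    (M : Finset (ConnIdeal P)) (hM : IsMaxIndep (GP P) M)
    (j : Fin n) (J : ConnIdeal P) (hJ : J ∈ M)
    (hjJ : J.1 \ mu P M J.1 = {j}) :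
    LamRel (FMle P M) j = J.1 := by
  have hj : j ∈ J.1 \ mu P M J.1 := hjJ ▸ mem_singleton_self j
  refine Finset.ext fun x => ?_
  rw [LamRel, mem_filter, and_iff_right (mem_univ x)]
  constructor
  · rintro (rfl | ⟨A, -, B, hB, hxA, hjB, hAB⟩)
    · exact (mem_sdiff.1 hj).1
    · have hBJ : B = J :=
        hM.1.pairwiseDisjoint_sdiff_mu.elim_finset hB hJ j (hjB ▸ mem_singleton_self j) hj
      exact hBJ ▸ hAB.1 (mem_sdiff.1 (hxA ▸ mem_singleton_self x)).1
  · intro hxJ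
    rcases eq_or_ne x j with rfl | hxj
    · exact Or.inl rfl
    obtain ⟨A, hA, hxA⟩ := hM.exists_sdiff_mu_eq_singleton x
    have hAJ : A.1 ⊆ J.1 := hM.1.subset_of_mem_sdiff_mu hA hJ (hxA ▸ mem_singleton_self x) hxJ
    refine Or.inr ⟨A, hA, J, hJ, hxA, hjJ, hAJ, fun hJA => hxj ?_⟩
    rw [← mem_singleton, ← hjJ, ← Subtype.ext (subset_antisymm hAJ hJA), hxA]
    exact mem_singleton_self x
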